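/- arXiv:1707.00167 — 4 statements merged into one kernel-verified Lean document; each statement's English description precedes it below -/
import Mathlib

section
/- Let G be a finite graph on n ≥ 4 vertices with labels assigned by a uniform random permutation, and let R₁(t) count edges with both endpoint labels ≤ t. Then Var(R₁(t)) = E[R₁(t)](1 − E[R₁(t)]) + [t(t−1)(t−2)/(n(n−1)(n−2))]·(Σᵢ|Gᵢ|² − 2|G|) + [t(t−1)(t−2)(t−3)/(n(n−1)(n−2)(n−3))]·(|G|² − Σᵢ|Gᵢ|² + |G|), where |Gᵢ| is the degree of vertex i and |G| is the number of edges. -/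
open Finset
open scoped Classical

noncomputable section

/-- Label of vertex `v` under permutation `π`: a value in `{1,...,n}`. -/
def lab {n : ℕ} (π : Equiv.Perm (Fin n)) (v : Fin n) : ℕ := (π v).val + 1

/-- Number of edges of `G` with both endpoint labels `≤ t`. -/
def R1 {n : ℕ} (G : SimpleGraph (Fin n)) (t : ℕ) (π : Equiv.Perm (Fin n)) : ℕ :=
  (G.edgeFinset.filter (fun e => ∀ v ∈ e, lab π v ≤ t)).card

/-- Number of edges of `G` with both endpoint labels `> t`. -/
def R2 {n : ℕ} (G : SimpleGraph (Fin n)) (t : ℕ) (π : Equiv.Perm (Fin n)) : ℕ :=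
  (G.edgeFinset.filter (fun e => ∀ v ∈ e, t < lab π v)).card

/-- Number of edges of `G` with one endpoint label `≤ t` and the other `> t`. -/
def R0 {n : ℕ} (G : SimpleGraph (Fin n)) (t : ℕ) (π : Equiv.Perm (Fin n)) : ℕ :=
  (G.edgeFinset.filter (fun e => (∃ v ∈ e, lab π v ≤ t) ∧ (∃ v ∈ e, t < lab π v))).card

/-- Expectation under the permutation null distribution (uniform over all `n!` permutations). -/
def Ex {n : ℕ} (f : Equiv.Perm (Fin n) → ℝ) : ℝ :=
  (∑ π : Equiv.Perm (Fin n), f π) / (Nat.factorial n)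

/-- Variance under the permutation null distribution. -/
def Var {n : ℕ} (f : Equiv.Perm (Fin n) → ℝ) : ℝ := Ex (fun π => (f π - Ex f) ^ 2)

/-- Covariance under the permutation null distribution. -/
def Cov {n : ℕ} (f g : Equiv.Perm (Fin n) → ℝ) : ℝ :=
  Ex (fun π => (f π - Ex f) * (g π - Ex g))

/-!
Write `T` for the `t` smallest labels. Then `R1 = ∑ₑ 1[π(e) ⊆ T]` and
`R1² = ∑ₑ ∑_f 1[π(e ∪ f) ⊆ T]`, and a fixed `k`-set of vertices is mapped into `T` with
probability `t(t-1)⋯(t-k+1) / n(n-1)⋯(n-k+1)`: by symmetry this probability depends only on `k`,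
and summing over all `k`-sets, which each permutation maps into `T` exactly `choose t k` times,
identifies it. It remains to count ordered pairs of edges by `#(e ∪ f) ∈ {2, 3, 4}`: there are
`|G|`, `∑ᵢ |Gᵢ|² - 2|G|` and `|G|² - ∑ᵢ |Gᵢ|² + |G|` of them, since `∑ₑ ∑_f #(e ∩ f) = ∑ᵢ |Gᵢ|²`.
-/

theorem Nat.cast_descFactorial_succ {S : Type*} [CommRing S] (a k : ℕ) :
    (a.descFactorial (k + 1) : S) = a.descFactorial k * (a - k) := by
  rw [Nat.descFactorial_succ]
  rcases le_or_gt k a with h | h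
  · push_cast [Nat.cast_sub h]
    ring
  · simp [Nat.descFactorial_of_lt h]

namespace Equiv.Perm

variable {α : Type*} [Fintype α] [DecidableEq α]

theorem card_mapsTo_eq_of_card_eq {A B : Finset α} (h : #A = #B) (T : Finset α) :
    #{π : Perm α | ∀ a ∈ A, π a ∈ T} = #{π : Perm α | ∀ b ∈ B, π b ∈ T} := by
  obtain ⟨σ, rfl⟩ := exists_map_finset_eq A B h
  refine card_equiv (Equiv.mulRight σ⁻¹) fun π => ?_
  simp only [mem_filter, mem_univ, true_and, forall_mem_map]
  simp

theorem card_mapsTo_mul_descFactorial (A T : Finset α) :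
    #{π : Perm α | ∀ a ∈ A, π a ∈ T} * (Fintype.card α).descFactorial #A
      = (Fintype.card α).factorial * (#T).descFactorial #A := by
  have hsubsets (π : Perm α) :
      #{B ∈ powersetCard (#A) univ | ∀ b ∈ B, π b ∈ T} = (#T).choose #A := by
    have : ({B ∈ powersetCard (#A) univ | ∀ b ∈ B, π b ∈ T} : Finset (Finset α))
        = powersetCard (#A) (T.map π.symm.toEmbedding) := by
      ext B
      simp [mem_powersetCard, subset_iff, and_comm]
    rw [this, card_powersetCard, card_map]
  have hchoose : #{π : Perm α | ∀ a ∈ A, π a ∈ T} * (Fintype.card α).choose #A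
      = (Fintype.card α).factorial * (#T).choose #A :=
    calc #{π : Perm α | ∀ a ∈ A, π a ∈ T} * (Fintype.card α).choose #A
        = ∑ _B ∈ powersetCard (#A) univ, #{π : Perm α | ∀ a ∈ A, π a ∈ T} := by
          rw [sum_const, card_powersetCard, card_univ, smul_eq_mul, mul_comm]
      _ = ∑ B ∈ powersetCard (#A) univ, #{π : Perm α | ∀ b ∈ B, π b ∈ T} :=
          sum_congr rfl fun B hB => card_mapsTo_eq_of_card_eq (mem_powersetCard.1 hB).2.symm T
      _ = ∑ π : Perm α, #{B ∈ powersetCard (#A) univ | ∀ b ∈ B, π b ∈ T} := by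
          simp only [card_filter]
          exact sum_comm
      _ = (Fintype.card α).factorial * (#T).choose #A := by
          simp [hsubsets, Fintype.card_perm]
  simp only [Nat.descFactorial_eq_factorial_mul_choose]
  rw [mul_left_comm, hchoose, mul_left_comm]

end Equiv.Perm

namespace Sym2

variable {α : Type*} [DecidableEq α]

theorem toFinset_injective : Function.Injective (toFinset : Sym2 α → Finset α) :=
  fun e f h => Sym2.ext fun x => by rw [← mem_toFinset, h, mem_toFinset]

theorem eq_of_two_le_card_toFinset_inter {e f : Sym2 α} (h : 2 ≤ #(e.toFinset ∩ f.toFinset)) :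
    e = f := by
  have hle (z : Sym2 α) : #z.toFinset ≤ 2 := by
    rw [card_toFinset]
    split_ifs <;> norm_num
  apply toFinset_injective
  rw [← eq_of_subset_of_card_le inter_subset_left ((hle e).trans h),
    eq_of_subset_of_card_le inter_subset_right ((hle f).trans h)]

end Sym2

namespace SimpleGraph

variable {V : Type*} [Fintype V] [DecidableEq V] {G : SimpleGraph V} [DecidableRel G.Adj]

theorem card_toFinset_of_mem_edgeFinset {e : Sym2 V} (he : e ∈ G.edgeFinset) :
    #e.toFinset = 2 :=
  Sym2.card_toFinset_of_not_isDiag e (G.not_isDiag_of_mem_edgeSet (mem_edgeFinset.1 he))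

variable (G) {R : Type*} [CommRing R]

theorem sum_sum_card_toFinset_inter :
    ∑ e ∈ G.edgeFinset, ∑ f ∈ G.edgeFinset, (#(e.toFinset ∩ f.toFinset) : R)
      = ∑ v, (G.degree v : R) ^ 2 := by
  have hinter (e f : Sym2 V) : (#(e.toFinset ∩ f.toFinset) : R)
      = ∑ v, (if v ∈ e then 1 else 0 : R) * (if v ∈ f then 1 else 0) := by
    simp_rw [ite_zero_mul_ite_zero, mul_one, sum_boole]
    congr 2
    ext v
    simp
  have hdegree (v : V) : ∑ e ∈ G.edgeFinset, (if v ∈ e then 1 else 0 : R) = G.degree v := by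
    rw [sum_boole, ← incidenceFinset_eq_filter, card_incidenceFinset_eq_degree]
  calc ∑ e ∈ G.edgeFinset, ∑ f ∈ G.edgeFinset, (#(e.toFinset ∩ f.toFinset) : R)
      = ∑ e ∈ G.edgeFinset, ∑ f ∈ G.edgeFinset, ∑ v,
          (if v ∈ e then 1 else 0 : R) * (if v ∈ f then 1 else 0) := by simp_rw [hinter]
    _ = ∑ v, (∑ e ∈ G.edgeFinset, (if v ∈ e then 1 else 0 : R))
          * ∑ f ∈ G.edgeFinset, (if v ∈ f then 1 else 0 : R) := by
      simp_rw [sum_mul_sum]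
      exact (sum_congr rfl fun e _ => sum_comm).trans sum_comm
    _ = ∑ v, (G.degree v : R) ^ 2 := by simp_rw [hdegree, sq]

theorem sum_sum_card_toFinset_union (c : ℕ → R) :
    ∑ e ∈ G.edgeFinset, ∑ f ∈ G.edgeFinset, c #(e.toFinset ∪ f.toFinset)
      = #G.edgeFinset ^ 2 * c 4 + (∑ v, (G.degree v : R) ^ 2) * (c 3 - c 4)
        + #G.edgeFinset * (c 2 - 2 * c 3 + c 4) := by
  -- Two edges share 0, 1 or 2 vertices, and 2 exactly when they are equal.
  have hinterp : ∀ e ∈ G.edgeFinset, ∀ f ∈ G.edgeFinset, c #(e.toFinset ∪ f.toFinset)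
      = c 4 + #(e.toFinset ∩ f.toFinset) * (c 3 - c 4)
        + (if e = f then 1 else 0) * (c 2 - 2 * c 3 + c 4) := by
    intro e he f hf
    have hunion := card_union_add_card_inter e.toFinset f.toFinset
    rw [card_toFinset_of_mem_edgeFinset he, card_toFinset_of_mem_edgeFinset hf] at hunion
    by_cases hef : e = f
    · subst hef
      rw [inter_self, card_toFinset_of_mem_edgeFinset he] at hunion ⊢
      rw [show #(e.toFinset ∪ e.toFinset) = 2 by omega, if_pos rfl]
      push_cast
      ring
    · have hlt : #(e.toFinset ∩ f.toFinset) < 2 :=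
        not_le.1 fun h => hef (Sym2.eq_of_two_le_card_toFinset_inter h)
      interval_cases h : #(e.toFinset ∩ f.toFinset)
      · rw [show #(e.toFinset ∪ f.toFinset) = 4 by omega, if_neg hef]
        simp
      · rw [show #(e.toFinset ∪ f.toFinset) = 3 by omega, if_neg hef]
        simp
  rw [sum_congr rfl fun e he => sum_congr rfl fun f hf => hinterp e he f hf]
  simp only [sum_add_distrib, ← sum_mul, sum_sum_card_toFinset_inter, sum_ite_eq, sum_const,
    nsmul_eq_mul]
  rw [sum_boole, filter_true_of_mem fun _ h => h, sq]

end SimpleGraph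

section NullDistribution

variable {n : ℕ}

theorem Ex_sum {ι : Type*} (s : Finset ι) (f : ι → Equiv.Perm (Fin n) → ℝ) :
    Ex (fun π => ∑ i ∈ s, f i π) = ∑ i ∈ s, Ex (f i) := by
  simp only [Ex]
  rw [sum_comm, sum_div]

theorem Var_eq_Ex_sq_sub_sq (f : Equiv.Perm (Fin n) → ℝ) :
    Var f = Ex (fun π => f π ^ 2) - Ex f ^ 2 := by
  have hfact : (n.factorial : ℝ) ≠ 0 := by positivity
  simp only [Var, Ex, sub_sq, sum_add_distrib, sum_sub_distrib, ← sum_mul, ← mul_sum, sum_const,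
    card_univ, Fintype.card_perm, Fintype.card_fin, nsmul_eq_mul]
  field_simp
  ring

theorem Ex_indicator_mapsTo (A T : Finset (Fin n)) :
    Ex (fun π => if ∀ a ∈ A, π a ∈ T then 1 else 0)
      = ((#T).descFactorial #A : ℝ) / n.descFactorial #A := by
  have hcount : #{π : Equiv.Perm (Fin n) | ∀ a ∈ A, π a ∈ T} * n.descFactorial #A
      = n.factorial * (#T).descFactorial #A := by
    convert Equiv.Perm.card_mapsTo_mul_descFactorial A T <;> simp
  have hA : (n.descFactorial #A : ℝ) ≠ 0 := by
    have hle : #A ≤ n := by simpa using card_le_univ A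
    exact_mod_cast (Nat.descFactorial_pos.2 hle).ne'
  rw [Ex, sum_boole, div_eq_div_iff (by positivity) hA]
  exact_mod_cast hcount.trans (mul_comm _ _)

theorem R1_eq_sum_indicator (G : SimpleGraph (Fin n)) {t : ℕ} (ht : t < n)
    (π : Equiv.Perm (Fin n)) :
    (R1 G t π : ℝ) = ∑ e ∈ G.edgeFinset,
      if ∀ v ∈ e.toFinset, π v ∈ Iio (⟨t, ht⟩ : Fin n) then 1 else 0 := by
  rw [sum_boole, R1]
  congr 2
  refine filter_congr fun e _ => forall_congr' fun v => ?_
  simp only [Sym2.mem_toFinset, mem_Iio, lab, Fin.lt_def, Nat.add_one_le_iff]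

end NullDistribution

theorem variance_R1_general (n t : ℕ) (ht2 : t < n)
    (G : SimpleGraph (Fin n)) :
    Var (fun π => (R1 G t π : ℝ)) =
      Ex (fun π => (R1 G t π : ℝ)) * (1 - Ex (fun π => (R1 G t π : ℝ)))
      + (t : ℝ) * ((t : ℝ) - 1) * ((t : ℝ) - 2) / ((n : ℝ) * ((n : ℝ) - 1) * ((n : ℝ) - 2))
          * ((∑ i : Fin n, (G.degree i : ℝ) ^ 2) - 2 * (G.edgeFinset.card : ℝ))
      + (t : ℝ) * ((t : ℝ) - 1) * ((t : ℝ) - 2) * ((t : ℝ) - 3) /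
          ((n : ℝ) * ((n : ℝ) - 1) * ((n : ℝ) - 2) * ((n : ℝ) - 3))
          * ((G.edgeFinset.card : ℝ) ^ 2 - (∑ i : Fin n, (G.degree i : ℝ) ^ 2)
              + (G.edgeFinset.card : ℝ)) := by
  set c : ℕ → ℝ := fun k => (t.descFactorial k : ℝ) / n.descFactorial k with hc
  have hindicator (A : Finset (Fin n)) :
      Ex (fun π => if ∀ a ∈ A, π a ∈ Iio (⟨t, ht2⟩ : Fin n) then 1 else 0) = c #A := by
    rw [Ex_indicator_mapsTo, Fin.card_Iio]
  have hEx : Ex (fun π => (R1 G t π : ℝ)) = #G.edgeFinset * c 2 := by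
    simp_rw [R1_eq_sum_indicator G ht2, Ex_sum, hindicator]
    rw [sum_congr rfl fun e he => by rw [SimpleGraph.card_toFinset_of_mem_edgeFinset he],
      sum_const, nsmul_eq_mul]
  have hEx_sq : Ex (fun π => (R1 G t π : ℝ) ^ 2)
      = #G.edgeFinset ^ 2 * c 4 + (∑ v, (G.degree v : ℝ) ^ 2) * (c 3 - c 4)
        + #G.edgeFinset * (c 2 - 2 * c 3 + c 4) := by
    rw [← G.sum_sum_card_toFinset_union c]
    simp_rw [R1_eq_sum_indicator G ht2, sq, sum_mul_sum, ite_zero_mul_ite_zero, mul_one,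
      ← forall_mem_union, Ex_sum, hindicator]
  have hc3 : c 3 = t * (t - 1) * (t - 2) / (n * (n - 1) * (n - 2)) := by
    simp only [hc, Nat.cast_descFactorial_succ, Nat.descFactorial_zero]
    push_cast
    ring
  have hc4 : c 4 = t * (t - 1) * (t - 2) * (t - 3) / (n * (n - 1) * (n - 2) * (n - 3)) := by
    simp only [hc, Nat.cast_descFactorial_succ, Nat.descFactorial_zero]
    push_cast
    ring
  rw [Var_eq_Ex_sq_sub_sq, hEx_sq, hEx, ← hc3, ← hc4]
  ring

theorem variance_R1 (n t : ℕ) (hn : 4 ≤ n) (ht1 : 1 ≤ t) (ht2 : t < n)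
    (G : SimpleGraph (Fin n)) :
    Var (fun π => (R1 G t π : ℝ)) =
      Ex (fun π => (R1 G t π : ℝ)) * (1 - Ex (fun π => (R1 G t π : ℝ)))
      + (t : ℝ) * ((t : ℝ) - 1) * ((t : ℝ) - 2) / ((n : ℝ) * ((n : ℝ) - 1) * ((n : ℝ) - 2))
          * ((∑ i : Fin n, (G.degree i : ℝ) ^ 2) - 2 * (G.edgeFinset.card : ℝ))
      + (t : ℝ) * ((t : ℝ) - 1) * ((t : ℝ) - 2) * ((t : ℝ) - 3) /
          ((n : ℝ) * ((n : ℝ) - 1) * ((n : ℝ) - 2) * ((n : ℝ) - 3))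
          * ((G.edgeFinset.card : ℝ) ^ 2 - (∑ i : Fin n, (G.degree i : ℝ) ^ 2)
              + (G.edgeFinset.card : ℝ)) :=
  variance_R1_general n t ht2 G
end
end

section
/- Let G be a finite graph on n ≥ 4 vertices with labels assigned by a uniform random permutation. With R₁(t), R₂(t) the within-group edge counts (both labels ≤ t, resp. both > t), the covariance is Cov(R₁(t), R₂(t)) = [t(t−1)(n−t)(n−t−1)/(n(n−1)(n−2)(n−3))]·(|G|² − Σᵢ|Gᵢ|² + |G|) − E[R₁(t)]·E[R₂(t)]. -/
/-
R₁R₂ counts ordered pairs (e, f) of edges with both labels of e at most t and both labels of f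
above t; such a pair is necessarily vertex-disjoint, so Cov(R₁, R₂) = E[R₁R₂] − E[R₁]E[R₂] reduces
to two counts. A uniform permutation sends the four endpoints of a disjoint pair to a uniform
injective 4-tuple (Perm α acts transitively on Fin 4 ↪ α, so averaging f (π • v) over π is
averaging f over all embeddings), so each disjoint pair contributes t(t−1)(n−t)(n−t−1)/(n)₄.
The disjoint pairs number |G|² − Σᵢ|Gᵢ|² + |G|, because Σᵢ|Gᵢ|² counts pairs of edges with
multiplicity |e ∩ f|: once for a pair meeting in one vertex and twice for a pair (e, e).
-/

open Finset
open scoped Classical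

noncomputable section

theorem MulAction.card_smul_sum_smul_eq_card_smul_sum {G X M : Type*} [Group G] [Fintype G]
    [MulAction G X] [Fintype X] [MulAction.IsPretransitive G X] [AddCommMonoid M]
    (f : X → M) (x : X) :
    Fintype.card X • ∑ g : G, f (g • x) = Fintype.card G • ∑ y, f y := by
  have sum_indep : ∀ y, ∑ g : G, f (g • y) = ∑ g : G, f (g • x) := by
    intro y
    obtain ⟨h, rfl⟩ := MulAction.exists_smul_eq G x y
    simp_rw [smul_smul]
    exact Fintype.sum_equiv (Equiv.mulRight h) _ _ fun _ => rfl
  calc Fintype.card X • ∑ g : G, f (g • x)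
      = ∑ y : X, ∑ g : G, f (g • y) := by simp [sum_indep]
    _ = ∑ g : G, ∑ y : X, f y := by
      rw [Finset.sum_comm]
      exact Finset.sum_congr rfl fun g _ => Equiv.sum_comp (MulAction.toPerm g) f
    _ = Fintype.card G • ∑ y, f y := by simp

theorem card_embedding_mul_card_filter_smul {ι α : Type*} [Fintype ι] [Fintype α]
    (v : ι ↪ α) (P : (ι ↪ α) → Prop) [DecidablePred P] :
    Fintype.card (ι ↪ α) * #{π : Equiv.Perm α | P (π • v)}
      = (Fintype.card α).factorial * #{j | P j} := by
  have : MulAction.IsPretransitive (Equiv.Perm α) (ι ↪ α) :=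
    ⟨Equiv.Perm.exists_smul_eq_embedding⟩
  have key := MulAction.card_smul_sum_smul_eq_card_smul_sum (G := Equiv.Perm α)
    (fun j => if P j then 1 else 0) v
  rwa [smul_eq_mul, smul_eq_mul, Fintype.card_perm, ← Finset.card_filter,
    ← Finset.card_filter] at key

theorem injective_vec_four {α : Type*} {a b c d : α} (hab : a ≠ b) (hac : a ≠ c) (had : a ≠ d)
    (hbc : b ≠ c) (hbd : b ≠ d) (hcd : c ≠ d) : Function.Injective ![a, b, c, d] := by
  intro i j h
  fin_cases i <;> fin_cases j <;> simp_all [eq_comm]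

theorem card_filter_embedding_fin_four {α : Type*} [Fintype α] [DecidableEq α] (L : Finset α) :
    #{j : Fin 4 ↪ α | j 0 ∈ L ∧ j 1 ∈ L ∧ j 2 ∉ L ∧ j 3 ∉ L} = #L.offDiag * #Lᶜ.offDiag := by
  rw [← Finset.card_product]
  have mem_iff (x y z w : α) : ((x, y), z, w) ∈ L.offDiag ×ˢ Lᶜ.offDiag ↔
      (x ∈ L ∧ y ∈ L ∧ x ≠ y) ∧ z ∉ L ∧ w ∉ L ∧ z ≠ w := by
    simp only [Finset.mem_product, Finset.mem_offDiag, Finset.mem_compl]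
  refine Finset.card_bij' (fun j _ => ((j 0, j 1), (j 2, j 3)))
    (fun p hp => ⟨![p.1.1, p.1.2, p.2.1, p.2.2], ?_⟩) ?_ ?_ ?_ ?_
  · obtain ⟨⟨x, y⟩, z, w⟩ := p
    obtain ⟨⟨hx, hy, hxy⟩, hz, hw, hzw⟩ := (mem_iff x y z w).mp hp
    exact injective_vec_four hxy (ne_of_mem_of_not_mem hx hz) (ne_of_mem_of_not_mem hx hw)
      (ne_of_mem_of_not_mem hy hz) (ne_of_mem_of_not_mem hy hw) hzw
  · intro j hj
    simp only [mem_filter, mem_univ, true_and] at hj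
    exact (mem_iff _ _ _ _).mpr ⟨⟨hj.1, hj.2.1, j.injective.ne (by decide)⟩, hj.2.2.1,
      hj.2.2.2, j.injective.ne (by decide)⟩
  · rintro ⟨⟨x, y⟩, z, w⟩ hp
    obtain ⟨⟨hx, hy, -⟩, hz, hw, -⟩ := (mem_iff x y z w).mp hp
    simpa using ⟨hx, hy, hz, hw⟩
  · intro j _
    ext i
    fin_cases i <;> rfl
  · intro p _
    rfl

theorem card_embedding_mul_card_perm_edge_in_edge_out {α : Type*} [Fintype α]
    [DecidableEq α] (L : Finset α) {e f : Sym2 α} (he : ¬e.IsDiag) (hf : ¬f.IsDiag)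
    (hef : ¬∃ v ∈ e, v ∈ f) :
    Fintype.card (Fin 4 ↪ α) * #{π : Equiv.Perm α | (∀ v ∈ e, π v ∈ L) ∧ ∀ v ∈ f, π v ∉ L}
      = (Fintype.card α).factorial * (#L.offDiag * #Lᶜ.offDiag) := by
  induction e with | _ a b => induction f with | _ c d =>
  simp only [Sym2.mk_isDiag_iff, Sym2.mem_iff, or_and_right, and_or_left, exists_or,
    exists_eq_left, not_or] at he hf hef
  obtain ⟨⟨hac, hbc⟩, had, hbd⟩ := hef
  let v : Fin 4 ↪ α := ⟨![a, b, c, d], injective_vec_four he hac had hbc hbd hf⟩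
  have key := card_embedding_mul_card_filter_smul v
    (fun j => j 0 ∈ L ∧ j 1 ∈ L ∧ j 2 ∉ L ∧ j 3 ∉ L)
  rw [card_filter_embedding_fin_four] at key
  convert key using 3
  ext π
  simp only [Finset.mem_filter, Finset.mem_univ, true_and]
  simp [v, Sym2.mem_iff, Function.Embedding.smul_apply, and_assoc]

theorem Sym2.card_filter_mem_and_mem {α : Type*} [Fintype α] [DecidableEq α] {e f : Sym2 α}
    (he : ¬e.IsDiag) :
    #{i | i ∈ e ∧ i ∈ f} = (if ∃ i ∈ e, i ∈ f then 1 else 0) + if e = f then 1 else 0 := by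
  by_cases hef : e = f
  · subst hef
    have : ∃ i, i ∈ e := ⟨_, Sym2.out_fst_mem e⟩
    rw [if_pos (by simpa using this), if_pos rfl]
    convert Sym2.card_toFinset_of_not_isDiag e he using 2
    ext i
    simp [Sym2.mem_toFinset]
  rw [if_neg hef, add_zero]
  split_ifs with hmeet
  · obtain ⟨x, hxe, hxf⟩ := hmeet
    rw [Finset.card_eq_one]
    refine ⟨x, Finset.eq_singleton_iff_unique_mem.mpr ⟨by simp [hxe, hxf], ?_⟩⟩
    rintro y hy
    simp only [Finset.mem_filter, Finset.mem_univ, true_and] at hy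
    by_contra hyx
    exact hef (((Sym2.mem_and_mem_iff hyx).mp ⟨hy.1, hxe⟩).trans
      ((Sym2.mem_and_mem_iff hyx).mp ⟨hy.2, hxf⟩).symm)
  · push Not at hmeet
    simpa using hmeet

namespace SimpleGraph

variable {V : Type*} [Fintype V] [DecidableEq V] (G : SimpleGraph V)

def disjointEdgePairs : Finset (Sym2 V × Sym2 V) :=
  {p ∈ G.edgeFinset ×ˢ G.edgeFinset | ¬∃ v ∈ p.1, v ∈ p.2}

theorem sum_degree_sq_eq_sum_card_common_vertices :
    ∑ i, G.degree i ^ 2 = ∑ p ∈ G.edgeFinset ×ˢ G.edgeFinset, #{i | i ∈ p.1 ∧ i ∈ p.2} := by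
  calc ∑ i, G.degree i ^ 2
      = ∑ i, #{p ∈ G.edgeFinset ×ˢ G.edgeFinset | i ∈ p.1 ∧ i ∈ p.2} := by
        refine Finset.sum_congr rfl fun i _ => ?_
        rw [sq, ← card_incidenceFinset_eq_degree, ← Finset.card_product]
        congr 1
        ext ⟨e, f⟩
        simp only [Finset.mem_product, mem_incidenceFinset, incidenceSet, Set.mem_ofPred_eq,
          Finset.mem_filter, mem_edgeFinset]
        tauto
    _ = _ := Finset.sum_card_bipartiteAbove_eq_sum_card_bipartiteBelow _

theorem card_disjointEdgePairs_add_sum_degree_sq :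
    #G.disjointEdgePairs + ∑ i, G.degree i ^ 2 = #G.edgeFinset ^ 2 + #G.edgeFinset := by
  have card_meeting : ∑ i, G.degree i ^ 2
      = #{p ∈ G.edgeFinset ×ˢ G.edgeFinset | ∃ v ∈ p.1, v ∈ p.2} + #G.edgeFinset := by
    have card_diag : ∑ p ∈ G.edgeFinset ×ˢ G.edgeFinset, (if p.1 = p.2 then 1 else 0)
        = #G.edgeFinset := by
      rw [Finset.sum_product]
      simp [Finset.filter_true_of_mem fun e he => mem_edgeFinset.mp he]
    rw [sum_degree_sq_eq_sum_card_common_vertices, ← card_diag, Finset.card_filter,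
      ← Finset.sum_add_distrib]
    refine Finset.sum_congr rfl fun p hp => ?_
    exact Sym2.card_filter_mem_and_mem
      (G.not_isDiag_of_mem_edgeFinset (Finset.mem_product.mp hp).1)
  rw [card_meeting, ← add_assoc, disjointEdgePairs, add_comm #(filter _ _),
    Finset.card_filter_add_card_filter_not, Finset.card_product, sq]

theorem card_embedding_mul_sum_card_edges_in_mul_card_edges_out (L : Finset V) :
    Fintype.card (Fin 4 ↪ V) * ∑ π : Equiv.Perm V,
        #{e ∈ G.edgeFinset | ∀ v ∈ e, π v ∈ L} * #{e ∈ G.edgeFinset | ∀ v ∈ e, π v ∉ L}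
      = (Fintype.card V).factorial * (#G.disjointEdgePairs * (#L.offDiag * #Lᶜ.offDiag)) := by
  have card_pairs (π : Equiv.Perm V) :
      #{e ∈ G.edgeFinset | ∀ v ∈ e, π v ∈ L} * #{e ∈ G.edgeFinset | ∀ v ∈ e, π v ∉ L}
        = #{p ∈ G.edgeFinset ×ˢ G.edgeFinset | (∀ v ∈ p.1, π v ∈ L) ∧ ∀ v ∈ p.2, π v ∉ L} := by
    rw [← Finset.card_product]
    congr 1
    ext ⟨e, f⟩
    simp only [Finset.mem_product, Finset.mem_filter]
    tauto
  have only_disjoint : ∀ p ∈ G.edgeFinset ×ˢ G.edgeFinset,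
      #{π : Equiv.Perm V | (∀ v ∈ p.1, π v ∈ L) ∧ ∀ v ∈ p.2, π v ∉ L} ≠ 0 →
        ¬∃ v ∈ p.1, v ∈ p.2 := by
    rintro p - hp ⟨v, hv₁, hv₂⟩
    obtain ⟨π, hπ⟩ := Finset.card_ne_zero.mp hp
    simp only [Finset.mem_filter, Finset.mem_univ, true_and] at hπ
    exact hπ.2 v hv₂ (hπ.1 v hv₁)
  have double_count : ∑ π : Equiv.Perm V,
      #{p ∈ G.edgeFinset ×ˢ G.edgeFinset | (∀ v ∈ p.1, π v ∈ L) ∧ ∀ v ∈ p.2, π v ∉ L}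
        = ∑ p ∈ G.edgeFinset ×ˢ G.edgeFinset,
            #{π : Equiv.Perm V | (∀ v ∈ p.1, π v ∈ L) ∧ ∀ v ∈ p.2, π v ∉ L} := by
    simp only [Finset.card_filter]
    exact Finset.sum_comm
  rw [Finset.sum_congr rfl fun π _ => card_pairs π, double_count, ← Finset.sum_filter_of_ne
    only_disjoint, Finset.mul_sum, ← disjointEdgePairs,
    Finset.sum_congr rfl (g := fun _ => (Fintype.card V).factorial * (#L.offDiag * #Lᶜ.offDiag)),
    Finset.sum_const, smul_eq_mul, mul_left_comm]
  intro p hp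
  simp only [disjointEdgePairs, Finset.mem_filter, Finset.mem_product, mem_edgeFinset] at hp
  exact card_embedding_mul_card_perm_edge_in_edge_out L (G.not_isDiag_of_mem_edgeSet hp.1.1)
    (G.not_isDiag_of_mem_edgeSet hp.1.2) hp.2

end SimpleGraph

theorem Cov_eq_Ex_mul_sub {n : ℕ} (f g : Equiv.Perm (Fin n) → ℝ) :
    Cov f g = Ex (fun π => f π * g π) - Ex f * Ex g := by
  have hfac : (n.factorial : ℝ) ≠ 0 := Nat.cast_ne_zero.mpr n.factorial_ne_zero
  simp only [Cov, Ex, sub_mul, mul_sub, Finset.sum_sub_distrib, ← Finset.sum_mul,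
    ← Finset.mul_sum, Finset.sum_const, Finset.card_univ, Fintype.card_perm, Fintype.card_fin,
    nsmul_eq_mul]
  field_simp
  ring

theorem Ex_R1_mul_R2 {n t : ℕ} (hn : 4 ≤ n) (ht : t ≤ n) (G : SimpleGraph (Fin n)) :
    Ex (fun π => (R1 G t π : ℝ) * (R2 G t π : ℝ))
      = (t : ℝ) * ((t : ℝ) - 1) * ((n : ℝ) - (t : ℝ)) * ((n : ℝ) - (t : ℝ) - 1) /
          ((n : ℝ) * ((n : ℝ) - 1) * ((n : ℝ) - 2) * ((n : ℝ) - 3))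
        * ((#G.edgeFinset : ℝ) ^ 2 - (∑ i : Fin n, (G.degree i : ℝ) ^ 2)
            + (#G.edgeFinset : ℝ)) := by
  -- `lab π v = π v + 1`, so the labels `≤ t` are the values `π v < t`.
  set L : Finset (Fin n) := {u | (u : ℕ) < t}
  have card_L : #L = t := by rw [Fin.card_filter_val_lt, min_eq_right ht]
  have cast_card_offDiag (s : Finset (Fin n)) : (#s.offDiag : ℝ) = #s * (#s - 1) := by
    rw [Finset.offDiag_card, Nat.cast_sub (Nat.le_mul_self _)]
    push_cast
    ring
  have card_embedding : (Fintype.card (Fin 4 ↪ Fin n) : ℝ) = n * (n - 1) * (n - 2) * (n - 3) := by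
    rw [Fintype.card_embedding_eq, Fintype.card_fin, Fintype.card_fin,
      ← descPochhammer_eval_eq_descFactorial]
    simp [descPochhammer_succ_right]
  have card_embedding_ne_zero : (n : ℝ) * (n - 1) * (n - 2) * (n - 3) ≠ 0 := by
    rw [← card_embedding, Fintype.card_embedding_eq, Fintype.card_fin, Fintype.card_fin,
      Nat.cast_ne_zero, Ne, Nat.descFactorial_eq_zero_iff_lt]
    omega
  have count : (n : ℝ) * (n - 1) * (n - 2) * (n - 3) * ∑ π, (R1 G t π : ℝ) * (R2 G t π : ℝ)
      = n.factorial * (#G.disjointEdgePairs * (t * (t - 1) * ((n - t) * (n - t - 1)))) := by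
    have := congrArg (Nat.cast : ℕ → ℝ)
      (G.card_embedding_mul_sum_card_edges_in_mul_card_edges_out L)
    simp only [Nat.cast_mul, Nat.cast_sum, card_embedding, cast_card_offDiag,
      Finset.card_compl, Fintype.card_fin, card_L, Nat.cast_sub ht] at this
    convert this using 4 with π <;> simp [R1, R2, lab, L]
  have pairs := congrArg (Nat.cast : ℕ → ℝ) G.card_disjointEdgePairs_add_sum_degree_sq
  push_cast at pairs
  have hfac : (n.factorial : ℝ) ≠ 0 := Nat.cast_ne_zero.mpr n.factorial_ne_zero
  rw [Ex, div_eq_iff hfac, div_mul_eq_mul_div, div_mul_eq_mul_div,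
    eq_div_iff card_embedding_ne_zero]
  linear_combination count + (n.factorial : ℝ) * t * (t - 1) * (n - t) * (n - t - 1) * pairs

theorem covariance_R1_R2_general (n t : ℕ) (hn : 4 ≤ n) (ht2 : t < n)
    (G : SimpleGraph (Fin n)) :
    Cov (fun π => (R1 G t π : ℝ)) (fun π => (R2 G t π : ℝ)) =
      (t : ℝ) * ((t : ℝ) - 1) * ((n : ℝ) - (t : ℝ)) * ((n : ℝ) - (t : ℝ) - 1) /
        ((n : ℝ) * ((n : ℝ) - 1) * ((n : ℝ) - 2) * ((n : ℝ) - 3))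
        * ((G.edgeFinset.card : ℝ) ^ 2 - (∑ i : Fin n, (G.degree i : ℝ) ^ 2)
            + (G.edgeFinset.card : ℝ))
      - Ex (fun π => (R1 G t π : ℝ)) * Ex (fun π => (R2 G t π : ℝ)) := by
  rw [Cov_eq_Ex_mul_sub, Ex_R1_mul_R2 hn ht2.le]

theorem covariance_R1_R2 (n t : ℕ) (hn : 4 ≤ n) (ht1 : 1 ≤ t) (ht2 : t < n)
    (G : SimpleGraph (Fin n)) :
    Cov (fun π => (R1 G t π : ℝ)) (fun π => (R2 G t π : ℝ)) =
      (t : ℝ) * ((t : ℝ) - 1) * ((n : ℝ) - (t : ℝ)) * ((n : ℝ) - (t : ℝ) - 1) /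
        ((n : ℝ) * ((n : ℝ) - 1) * ((n : ℝ) - 2) * ((n : ℝ) - 3))
        * ((G.edgeFinset.card : ℝ) ^ 2 - (∑ i : Fin n, (G.degree i : ℝ) ^ 2)
            + (G.edgeFinset.card : ℝ))
      - Ex (fun π => (R1 G t π : ℝ)) * Ex (fun π => (R2 G t π : ℝ)) :=
  covariance_R1_R2_general n t hn ht2 G
end
end

section
/- Let G be a finite graph on n ≥ 3 vertices with labels assigned by a uniform random permutation, and define the weighted edge count R_w(t) = q(t)·R₁(t) + p(t)·R₂(t) with p(t) = (t−1)/(n−2), q(t) = 1 − p(t). Then E[R_w(t)] = |G| · (t−1)(n−t−1)/((n−1)(n−2)). -/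
open Finset
open scoped Classical

noncomputable section

/-- Weighted edge count `R_w(t) = q(t) R₁(t) + p(t) R₂(t)` with `p(t) = (t-1)/(n-2)`. -/
def Rw {n : ℕ} (G : SimpleGraph (Fin n)) (t : ℕ) (π : Equiv.Perm (Fin n)) : ℝ :=
  (1 - ((t : ℝ) - 1) / ((n : ℝ) - 2)) * (R1 G t π : ℝ)
    + (((t : ℝ) - 1) / ((n : ℝ) - 2)) * (R2 G t π : ℝ)

/-!
By linearity, `Ex R1` and `Ex R2` are `|G|` times the probability that both endpoints of a
fixed edge receive labels in a given set of `k` labels (`k = t` for `R1`, `k = n - t` for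
`R2`). Permutations act 2-transitively, so this probability is the same for every pair of
distinct vertices; averaging over all `n (n - 1)` ordered pairs shows it is
`k (k - 1) / (n (n - 1))`. The formula for `Ex Rw` is then the identity
`(n - 1 - t) t (t - 1) + (t - 1) (n - t) (n - t - 1) = n (t - 1) (n - t - 1)`.
-/

namespace Equiv.Perm

variable {α : Type*}

theorem exists_apply_eq_and_apply_eq {a b c d : α} (hab : a ≠ b) (hcd : c ≠ d) :
    ∃ σ : Perm α, σ a = c ∧ σ b = d :=
  MulAction.is_two_pretransitive_iff.mp (isMultiplyPretransitive α 2) hab hcd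

variable [Fintype α] [DecidableEq α] {M : Type*} [AddCommMonoid M]

theorem sum_apply_apply_eq (f : α → α → M) {a b c d : α} (hab : a ≠ b) (hcd : c ≠ d) :
    ∑ π : Perm α, f (π a) (π b) = ∑ π : Perm α, f (π c) (π d) := by
  obtain ⟨σ, rfl, rfl⟩ := exists_apply_eq_and_apply_eq hcd hab
  exact Fintype.sum_equiv (Equiv.mulRight σ) _ _ fun π => rfl

theorem card_offDiag_smul_sum_apply_apply (f : α → α → M) {a b : α} (hab : a ≠ b) :
    #(univ : Finset α).offDiag • ∑ π : Perm α, f (π a) (π b) =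
      (Fintype.card α).factorial • ∑ p ∈ (univ : Finset α).offDiag, f p.1 p.2 := by
  calc #(univ : Finset α).offDiag • ∑ π : Perm α, f (π a) (π b)
      = ∑ p ∈ (univ : Finset α).offDiag, ∑ π : Perm α, f (π p.1) (π p.2) := by
        rw [← sum_const]
        refine sum_congr rfl fun p hp => sum_apply_apply_eq f hab ?_
        exact (mem_offDiag.mp hp).2.2
    _ = ∑ π : Perm α, ∑ p ∈ (univ : Finset α).offDiag, f (π p.1) (π p.2) := sum_comm
    _ = ∑ _π : Perm α, ∑ p ∈ (univ : Finset α).offDiag, f p.1 p.2 := by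
        refine sum_congr rfl fun π _ => ?_
        exact sum_equiv (π.prodCongr π) (by simp) fun _ _ => rfl
    _ = _ := by rw [sum_const, card_univ, Fintype.card_perm]

end Equiv.Perm

theorem Finset.natCast_card_offDiag {α R : Type*} [DecidableEq α] [Ring R] (s : Finset α) :
    (#s.offDiag : R) = #s * (#s - 1) := by
  rw [offDiag_card, Nat.cast_sub (Nat.le_mul_self _), Nat.cast_mul, mul_sub_one]

theorem Fin.card_filter_val_add_one_le {n t : ℕ} (ht : t ≤ n) :
    #{x : Fin n | x.val + 1 ≤ t} = t := by
  simpa [Nat.succ_le_iff, ht] using Fin.card_filter_val_lt (n := n) (m := t)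

theorem Fin.card_filter_lt_val_add_one {n t : ℕ} (ht : t ≤ n) :
    #{x : Fin n | t < x.val + 1} = n - t := by
  have h := card_filter_add_card_filter_not (s := univ) (fun x : Fin n => x.val + 1 ≤ t)
  simp only [not_le, card_univ, Fintype.card_fin, Fin.card_filter_val_add_one_le ht] at h
  omega

section Expectation

variable {n : ℕ}

theorem Ex_mul_add_mul (c d : ℝ) (f g : Equiv.Perm (Fin n) → ℝ) :
    Ex (fun π => c * f π + d * g π) = c * Ex f + d * Ex g := by
  rw [Ex, Ex, Ex, sum_add_distrib, ← mul_sum, ← mul_sum]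
  ring

variable (P : Fin n → Prop) [DecidablePred P]

theorem Ex_ite_apply_and_apply {a b : Fin n} (hab : a ≠ b) :
    Ex (fun π => if P (π a) ∧ P (π b) then 1 else 0) =
      #{x | P x} * (#{x | P x} - 1 : ℝ) / (n * (n - 1)) := by
  have hcount := Equiv.Perm.card_offDiag_smul_sum_apply_apply
    (fun x y => if P x ∧ P y then (1 : ℝ) else 0) hab
  have hpairs : {p ∈ (univ : Finset (Fin n)).offDiag | P p.1 ∧ P p.2} =
      ({x | P x} : Finset (Fin n)).offDiag := by
    ext p
    simp only [mem_filter, mem_offDiag, mem_univ, true_and]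
    tauto
  rw [nsmul_eq_mul, nsmul_eq_mul, sum_boole (fun p : Fin n × Fin n => P p.1 ∧ P p.2), hpairs,
    natCast_card_offDiag, natCast_card_offDiag, card_univ, Fintype.card_fin] at hcount
  have hn : (1 : ℝ) < n := by
    exact_mod_cast (by simpa using Fintype.one_lt_card_iff.mpr ⟨a, b, hab⟩ : 1 < n)
  rw [Ex, div_eq_div_iff (by positivity) (by positivity)]
  linarith

theorem Ex_ite_forall_mem_of_not_isDiag {e : Sym2 (Fin n)} (he : ¬ e.IsDiag) :
    Ex (fun π => if ∀ v ∈ e, P (π v) then 1 else 0) =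
      #{x | P x} * (#{x | P x} - 1 : ℝ) / (n * (n - 1)) := by
  induction e using Sym2.ind with
  | _ a b => simpa only [Sym2.forall_mem_pair] using Ex_ite_apply_and_apply P (by simpa using he)

theorem Ex_card_filter_edgeFinset_forall_mem (G : SimpleGraph (Fin n)) :
    Ex (fun π => (#{e ∈ G.edgeFinset | ∀ v ∈ e, P (π v)} : ℝ)) =
      #G.edgeFinset * (#{x | P x} * (#{x | P x} - 1 : ℝ) / (n * (n - 1))) := by
  simp only [natCast_card_filter _ G.edgeFinset]
  rw [Ex_sum, sum_congr rfl fun e he =>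
    Ex_ite_forall_mem_of_not_isDiag P (G.not_isDiag_of_mem_edgeFinset he), sum_const, nsmul_eq_mul]

theorem Ex_R1 (G : SimpleGraph (Fin n)) {t : ℕ} (ht : t ≤ n) :
    Ex (fun π => (R1 G t π : ℝ)) = #G.edgeFinset * (t * (t - 1) / (n * (n - 1))) := by
  have h := Ex_card_filter_edgeFinset_forall_mem (fun x : Fin n => x.val + 1 ≤ t) G
  rwa [Fin.card_filter_val_add_one_le ht] at h

theorem Ex_R2 (G : SimpleGraph (Fin n)) {t : ℕ} (ht : t ≤ n) :
    Ex (fun π => (R2 G t π : ℝ)) = #G.edgeFinset * ((n - t) * (n - t - 1) / (n * (n - 1))) := by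
  have h := Ex_card_filter_edgeFinset_forall_mem (fun x : Fin n => t < x.val + 1) G
  rwa [Fin.card_filter_lt_val_add_one ht, Nat.cast_sub ht] at h

end Expectation

theorem expectation_Rw_general (n t : ℕ) (hn : 3 ≤ n) (ht2 : t < n)
    (G : SimpleGraph (Fin n)) :
    Ex (fun π => Rw G t π) =
      (G.edgeFinset.card : ℝ) * (((t : ℝ) - 1) * ((n : ℝ) - (t : ℝ) - 1)) /
        (((n : ℝ) - 1) * ((n : ℝ) - 2)) := by
  have hn3 : (3 : ℝ) ≤ n := by exact_mod_cast hn
  have hn2 : (n : ℝ) - 2 ≠ 0 := by linarith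
  have hn1 : (n : ℝ) - 1 ≠ 0 := by linarith
  have hn0 : (n : ℝ) ≠ 0 := by linarith
  simp only [Rw]
  rw [Ex_mul_add_mul, Ex_R1 G ht2.le, Ex_R2 G ht2.le]
  field_simp
  ring

theorem expectation_Rw (n t : ℕ) (hn : 3 ≤ n) (ht1 : 1 ≤ t) (ht2 : t < n)
    (G : SimpleGraph (Fin n)) :
    Ex (fun π => Rw G t π) =
      (G.edgeFinset.card : ℝ) * (((t : ℝ) - 1) * ((n : ℝ) - (t : ℝ) - 1)) /
        (((n : ℝ) - 1) * ((n : ℝ) - 2)) :=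
  expectation_Rw_general n t hn ht2 G
end
end

section
/- Under the permutation null distribution, the random variables R_w(t) = q(t)R₁(t) + p(t)R₂(t) (with p(t) = (t−1)/(n−2), q(t) = 1−p(t)) and R_diff(t) = R₁(t) − R₂(t) are uncorrelated: Cov(R_w(t), R_diff(t)) = 0. -/
open Finset
open scoped Classical

noncomputable section

/-- Difference of within-group edge counts `R_diff(t) = R₁(t) - R₂(t)`. -/
def Rdiff {n : ℕ} (G : SimpleGraph (Fin n)) (t : ℕ) (π : Equiv.Perm (Fin n)) : ℝ :=
  (R1 G t π : ℝ) - (R2 G t π : ℝ)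


/-!
Write `x_v = 1[lab v ≤ t]`. For an edge `uv` the indicator that both labels are `≤ t` is
`x_u x_v` and the indicator that both are `> t` is `(1 - x_u)(1 - x_v)`. Hence `R_diff` is the
linear form `∑_{uv} (x_u + x_v - 1)`, while `(n - 2) R_w` is, up to a constant,
`∑_{uv} ((n - 2) x_u x_v - (t - 1)(x_u + x_v))`. So it suffices that
`(n - 2) Cov(x_u x_v, x_w) = (t - 1) (Cov(x_u, x_w) + Cov(x_v, x_w))` for all `u ≠ v` and `w`,
a direct check from the moments `E[∏_{a ∈ A} x_a] = ∏_{i < |A|} (t - i)/(n - i)` of the uniformly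
random `t`-set of low labels. These follow by induction on `A`: a transposition shows that
`E[x_A x_w]` does not depend on `w ∉ A`, and `∑_{w ∉ A} x_A x_w = (t - |A|) x_A`.
-/

open scoped BigOperators

namespace PermutationNull

variable {n : ℕ}

lemma Ex_eq_expect (f : Equiv.Perm (Fin n) → ℝ) : Ex f = 𝔼 π, f π := by
  rw [Ex, Fintype.expect_eq_sum_div_card, Fintype.card_perm, Fintype.card_fin]

lemma Cov_eq_sub (f g : Equiv.Perm (Fin n) → ℝ) :
    Cov f g = Ex (fun π => f π * g π) - Ex f * Ex g := by
  simp only [Cov, Ex_eq_expect, sub_mul, mul_sub, expect_sub_distrib, ← expect_mul, ← mul_expect,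
    Fintype.expect_const]
  ring

lemma Ex_sum {ι : Type*} (s : Finset ι) (f : ι → Equiv.Perm (Fin n) → ℝ) :
    Ex (fun π => ∑ i ∈ s, f i π) = ∑ i ∈ s, Ex (f i) := by
  simp only [Ex_eq_expect, expect_sum_comm]

lemma Ex_const_mul (c : ℝ) (f : Equiv.Perm (Fin n) → ℝ) : Ex (fun π => c * f π) = c * Ex f := by
  simp only [Ex_eq_expect, mul_expect]

lemma Cov_sum_sum {ι κ : Type*} (s : Finset ι) (s' : Finset κ)
    (f : ι → Equiv.Perm (Fin n) → ℝ) (g : κ → Equiv.Perm (Fin n) → ℝ) :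
    Cov (fun π => ∑ i ∈ s, f i π) (fun π => ∑ j ∈ s', g j π)
      = ∑ i ∈ s, ∑ j ∈ s', Cov (f i) (g j) := by
  simp only [Cov_eq_sub, sum_mul_sum, Ex_sum, sum_sub_distrib]

section Linearity

variable (f g h : Equiv.Perm (Fin n) → ℝ) (c : ℝ)

lemma Cov_add_left : Cov (fun π => f π + g π) h = Cov f h + Cov g h := by
  simp only [Cov_eq_sub, Ex_eq_expect, add_mul, expect_add_distrib]; ring

lemma Cov_sub_left : Cov (fun π => f π - g π) h = Cov f h - Cov g h := by
  simp only [Cov_eq_sub, Ex_eq_expect, sub_mul, expect_sub_distrib]; ring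

lemma Cov_const_mul_left : Cov (fun π => c * f π) g = c * Cov f g := by
  simp only [Cov_eq_sub, Ex_eq_expect, mul_assoc, ← mul_expect]; ring

lemma Cov_add_const_left : Cov (fun π => f π + c) g = Cov f g := by
  simp only [Cov_eq_sub, Ex_eq_expect, add_mul, expect_add_distrib, ← mul_expect,
    Fintype.expect_const]; ring

lemma Cov_add_right : Cov f (fun π => g π + h π) = Cov f g + Cov f h := by
  simp only [Cov_eq_sub, Ex_eq_expect, mul_add, expect_add_distrib]; ring

lemma Cov_sub_const_right : Cov f (fun π => g π - c) = Cov f g := by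
  simp only [Cov_eq_sub, Ex_eq_expect, mul_sub, expect_sub_distrib, ← expect_mul,
    Fintype.expect_const]; ring

end Linearity

variable {t : ℕ}

def lowSet (t : ℕ) (π : Equiv.Perm (Fin n)) : Finset (Fin n) := univ.filter (fun v => lab π v ≤ t)

lemma lab_le_iff_mem_lowSet {π : Equiv.Perm (Fin n)} {v : Fin n} :
    lab π v ≤ t ↔ v ∈ lowSet t π := by
  simp [lowSet]

lemma mem_lowSet {π : Equiv.Perm (Fin n)} {v : Fin n} : v ∈ lowSet t π ↔ (π v : ℕ) < t := by
  rw [← lab_le_iff_mem_lowSet, lab]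
  omega

lemma card_lowSet (ht : t ≤ n) (π : Equiv.Perm (Fin n)) : #(lowSet t π) = t := by
  have : lowSet t π = (univ.filter fun i : Fin n => (i : ℕ) < t).map π.symm.toEmbedding := by
    ext v
    simp [mem_lowSet]
  rw [this, card_map, Fin.card_filter_val_lt, min_eq_right ht]

def lowInd (t : ℕ) (A : Finset (Fin n)) (π : Equiv.Perm (Fin n)) : ℝ :=
  if A ⊆ lowSet t π then 1 else 0

lemma lowInd_mul_lowInd (A B : Finset (Fin n)) (π : Equiv.Perm (Fin n)) :
    lowInd t A π * lowInd t B π = lowInd t (A ∪ B) π := by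
  simp only [lowInd, union_subset_iff]
  split_ifs <;> simp_all

lemma Ex_lowInd_image (A : Finset (Fin n)) (σ : Equiv.Perm (Fin n)) :
    Ex (lowInd t (A.image σ)) = Ex (lowInd t A) := by
  simp only [Ex_eq_expect]
  refine Fintype.expect_equiv (Equiv.mulRight σ) _ _ fun π => ?_
  have : A.image σ ⊆ lowSet t π ↔ A ⊆ lowSet t (π * σ) := by
    simp [subset_iff, mem_lowSet]
  exact if_congr this rfl rfl

lemma sum_lowInd_insert (ht : t ≤ n) (A : Finset (Fin n)) (π : Equiv.Perm (Fin n)) :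
    ∑ w ∈ Aᶜ, lowInd t (insert w A) π = ((t : ℝ) - #A) * lowInd t A π := by
  by_cases hA : A ⊆ lowSet t π
  · have : ∀ w ∈ Aᶜ, lowInd t (insert w A) π = if w ∈ lowSet t π then 1 else 0 := by
      intro w _
      simp [lowInd, insert_subset_iff, hA]
    rw [sum_congr rfl this, sum_boole, lowInd, if_pos hA, mul_one, filter_mem_eq_inter,
      inter_comm, ← sdiff_eq_inter_compl, card_sdiff_of_subset hA, Nat.cast_sub (card_le_card hA),
      card_lowSet ht]
  · have : ∀ w ∈ Aᶜ, lowInd t (insert w A) π = 0 := by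
      intro w _
      simp only [lowInd, insert_subset_iff]
      simp [hA]
    rw [sum_eq_zero this, lowInd, if_neg hA, mul_zero]

lemma Ex_lowInd_insert (ht : t ≤ n) {A : Finset (Fin n)} {w : Fin n} (hw : w ∉ A) :
    ((n : ℝ) - #A) * Ex (lowInd t (insert w A)) = ((t : ℝ) - #A) * Ex (lowInd t A) := by
  have hswap : ∀ w' ∈ Aᶜ, Ex (lowInd t (insert w' A)) = Ex (lowInd t (insert w A)) := by
    intro w' hw'
    rw [mem_compl] at hw'
    have : (insert w A).image (Equiv.swap w w') = insert w' A := by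
      rw [image_insert, Equiv.swap_apply_left, image_congr (g := id), image_id]
      intro v hv
      exact Equiv.swap_apply_of_ne_of_ne (ne_of_mem_of_not_mem hv hw) (ne_of_mem_of_not_mem hv hw')
    rw [← this, Ex_lowInd_image]
  calc ((n : ℝ) - #A) * Ex (lowInd t (insert w A))
      = ∑ w' ∈ Aᶜ, Ex (lowInd t (insert w' A)) := by
        rw [sum_congr rfl hswap, sum_const, card_compl, Fintype.card_fin, nsmul_eq_mul,
          Nat.cast_sub (card_le_univ A |>.trans_eq (Fintype.card_fin n))]
    _ = Ex (fun π => ((t : ℝ) - #A) * lowInd t A π) := by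
        rw [← Ex_sum]
        simp only [sum_lowInd_insert ht]
    _ = ((t : ℝ) - #A) * Ex (lowInd t A) := Ex_const_mul _ _

lemma Ex_lowInd (ht : t ≤ n) (A : Finset (Fin n)) :
    Ex (lowInd t A) = ∏ i ∈ range #A, ((t : ℝ) - i) / ((n : ℝ) - i) := by
  induction A using Finset.induction_on with
  | empty => simp [Ex_eq_expect, lowInd]
  | insert w A hw ih =>
    have hA : (n : ℝ) - #A ≠ 0 := by
      have : #A < n := (card_lt_univ_of_notMem hw).trans_eq (Fintype.card_fin n)
      exact sub_ne_zero.mpr (by exact_mod_cast this.ne')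
    rw [card_insert_of_notMem hw, prod_range_succ, ← ih, mul_div_assoc', eq_div_iff hA]
    linear_combination Ex_lowInd_insert ht hw

lemma Cov_lowInd (ht : t ≤ n) (A B : Finset (Fin n)) :
    Cov (lowInd t A) (lowInd t B) = ∏ i ∈ range #(A ∪ B), ((t : ℝ) - i) / ((n : ℝ) - i)
      - (∏ i ∈ range #A, ((t : ℝ) - i) / ((n : ℝ) - i))
        * ∏ i ∈ range #B, ((t : ℝ) - i) / ((n : ℝ) - i) := by
  simp only [Cov_eq_sub, lowInd_mul_lowInd, Ex_lowInd ht]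

lemma sub_two_mul_Cov_lowInd_pair (ht : t ≤ n) {u v : Fin n} (huv : u ≠ v) (w : Fin n) :
    ((n : ℝ) - 2) * Cov (lowInd t {u, v}) (lowInd t {w})
      = ((t : ℝ) - 1)
        * (Cov (lowInd t {u}) (lowInd t {w}) + Cov (lowInd t {v}) (lowInd t {w})) := by
  have hn2 : (2 : ℝ) ≤ n := by
    exact_mod_cast card_pair huv ▸ (card_le_univ {u, v}).trans_eq (Fintype.card_fin n)
  have h0 : (n : ℝ) ≠ 0 := by linarith
  have h1 : (n : ℝ) - 1 ≠ 0 := by linarith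
  simp only [Cov_lowInd ht]
  rcases eq_or_ne w u with rfl | hwu
  · simp only [insert_union, singleton_union, mem_insert, mem_singleton, or_true,
      insert_eq_of_mem, union_idempotent, card_pair huv, card_pair huv.symm, card_singleton,
      prod_range_succ, range_one, prod_singleton, CharP.cast_eq_zero, sub_zero, Nat.cast_one]
    field_simp
    ring
  rcases eq_or_ne w v with rfl | hwv
  · simp only [insert_union, singleton_union, union_idempotent, card_pair huv, card_singleton,
      prod_range_succ, range_one, prod_singleton, CharP.cast_eq_zero, sub_zero, Nat.cast_one]
    field_simp
    ring
  have h3 : #({u, v, w} : Finset (Fin n)) = 3 := by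
    rw [card_insert_of_notMem (by simp [huv, hwu.symm]), card_pair hwv.symm]
  have hn3 : (3 : ℝ) ≤ n := by
    exact_mod_cast h3 ▸ (card_le_univ {u, v, w}).trans_eq (Fintype.card_fin n)
  have h2 : (n : ℝ) - 2 ≠ 0 := by linarith
  have : ({u, v} : Finset (Fin n)) ∪ {w} = {u, v, w} := by ext; simp
  simp only [this, singleton_union, h3, card_pair huv, card_pair hwu.symm, card_pair hwv.symm,
    card_singleton, prod_range_succ, range_one, prod_singleton, CharP.cast_eq_zero, sub_zero,
    Nat.cast_one, Nat.cast_ofNat]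
  field_simp
  ring

def edgeLow (t : ℕ) (e : Sym2 (Fin n)) (π : Equiv.Perm (Fin n)) : ℝ :=
  if ∀ v ∈ e, lab π v ≤ t then 1 else 0

def edgeHigh (t : ℕ) (e : Sym2 (Fin n)) (π : Equiv.Perm (Fin n)) : ℝ :=
  if ∀ v ∈ e, t < lab π v then 1 else 0

lemma R1_eq_sum (G : SimpleGraph (Fin n)) (π : Equiv.Perm (Fin n)) :
    (R1 G t π : ℝ) = ∑ e ∈ G.edgeFinset, edgeLow t e π := by
  rw [R1, natCast_card_filter]
  rfl

lemma R2_eq_sum (G : SimpleGraph (Fin n)) (π : Equiv.Perm (Fin n)) :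
    (R2 G t π : ℝ) = ∑ e ∈ G.edgeFinset, edgeHigh t e π := by
  rw [R2, natCast_card_filter]
  rfl

lemma edgeLow_mk (u v : Fin n) (π : Equiv.Perm (Fin n)) :
    edgeLow t s(u, v) π = lowInd t {u, v} π := by
  simp only [edgeLow, lowInd, Sym2.forall_mem_pair, lab_le_iff_mem_lowSet, insert_subset_iff,
    singleton_subset_iff]

lemma edgeHigh_mk (u v : Fin n) (π : Equiv.Perm (Fin n)) :
    edgeHigh t s(u, v) π = 1 - lowInd t {u} π - lowInd t {v} π + lowInd t {u, v} π := by
  simp only [edgeHigh, lowInd, Sym2.forall_mem_pair, ← not_le, lab_le_iff_mem_lowSet,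
    insert_subset_iff, singleton_subset_iff]
  split_ifs <;> simp_all

lemma Cov_edge_eq_zero (ht : t ≤ n) (hn : (n : ℝ) - 2 ≠ 0) {e : Sym2 (Fin n)} (he : ¬ e.IsDiag)
    (e' : Sym2 (Fin n)) :
    Cov (fun π => (1 - ((t : ℝ) - 1) / ((n : ℝ) - 2)) * edgeLow t e π
        + ((t : ℝ) - 1) / ((n : ℝ) - 2) * edgeHigh t e π)
      (fun π => edgeLow t e' π - edgeHigh t e' π) = 0 := by
  set p := ((t : ℝ) - 1) / ((n : ℝ) - 2) with hp
  induction e using Sym2.ind with | _ u v => ?_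
  induction e' using Sym2.ind with | _ a b => ?_
  have huv : u ≠ v := by simpa using he
  have hCov : ∀ w, Cov (fun π => lowInd t {u, v} π - p * (lowInd t {u} π + lowInd t {v} π))
      (lowInd t {w}) = 0 := by
    intro w
    rw [Cov_sub_left, Cov_const_mul_left, Cov_add_left, hp, sub_eq_zero, div_mul_eq_mul_div,
      eq_div_iff hn, mul_comm, sub_two_mul_Cov_lowInd_pair ht huv w]
  have hRw : (fun π => (1 - p) * edgeLow t s(u, v) π + p * edgeHigh t s(u, v) π)
      = fun π => (lowInd t {u, v} π - p * (lowInd t {u} π + lowInd t {v} π)) + p := by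
    funext π
    rw [edgeLow_mk, edgeHigh_mk]
    ring
  have hRdiff : (fun π => edgeLow t s(a, b) π - edgeHigh t s(a, b) π)
      = fun π => (lowInd t {a} π + lowInd t {b} π) - 1 := by
    funext π
    rw [edgeLow_mk, edgeHigh_mk]
    ring
  rw [hRw, hRdiff, Cov_add_const_left, Cov_sub_const_right, Cov_add_right, hCov, hCov, add_zero]

end PermutationNull

open PermutationNull in
theorem covariance_Rw_Rdiff_eq_zero_general (n t : ℕ) (hn : 4 ≤ n) (ht2 : t < n)
    (G : SimpleGraph (Fin n)) :
    Cov (fun π => Rw G t π) (fun π => Rdiff G t π) = 0 := by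
  have hn2 : (n : ℝ) - 2 ≠ 0 := by
    have : (4 : ℝ) ≤ n := by exact_mod_cast hn
    linarith
  have hRw : (fun π => Rw G t π) = fun π => ∑ e ∈ G.edgeFinset,
      ((1 - ((t : ℝ) - 1) / ((n : ℝ) - 2)) * edgeLow t e π
        + ((t : ℝ) - 1) / ((n : ℝ) - 2) * edgeHigh t e π) := by
    funext π
    rw [Rw, R1_eq_sum, R2_eq_sum, mul_sum, mul_sum, sum_add_distrib]
  have hRdiff : (fun π => Rdiff G t π) = fun π => ∑ e ∈ G.edgeFinset,
      (edgeLow t e π - edgeHigh t e π) := by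
    funext π
    rw [Rdiff, R1_eq_sum, R2_eq_sum, sum_sub_distrib]
  rw [hRw, hRdiff, Cov_sum_sum]
  refine sum_eq_zero fun e he => sum_eq_zero fun e' _ => ?_
  exact Cov_edge_eq_zero ht2.le hn2
    (G.not_isDiag_of_mem_edgeSet (SimpleGraph.mem_edgeFinset.mp he)) e'

theorem covariance_Rw_Rdiff_eq_zero (n t : ℕ) (hn : 4 ≤ n) (ht1 : 1 ≤ t) (ht2 : t < n)
    (G : SimpleGraph (Fin n)) :
    Cov (fun π => Rw G t π) (fun π => Rdiff G t π) = 0 :=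
  covariance_Rw_Rdiff_eq_zero_general n t hn ht2 G
end
end
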